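/- arXiv:2105.03335 — 9 statements merged into one kernel-verified Lean document; each statement's English description precedes it below -/
import Mathlib

section
/- Let S be a semilattice (join-semilattice) and Q a partial order. If f : Q → S is a monotone map whose image consists of join-irreducible elements of S, then there is a unique semilattice homomorphism f⊔ from the semilattice Q⊔ of finite nonempty subsets of Q (ordered by: A ≤ B iff every element of A is below some element of B, with join given by union) to S extending f. -/
/-! `Q⊔` is the free join-semilattice on the poset `Q`: the extension of `f` must send `A` to
`A.sup' f`, since `A` is the union of its singletons, and monotonicity of `f` makes this map
monotone for `≤*`. -/

namespace Finset

variable {Q S : Type*} [SemilatticeSup S]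

def supExtension (f : Q → S) (A : {A : Finset Q // A.Nonempty}) : S :=
  A.1.sup' A.2 f

theorem supExtension_singleton (f : Q → S) (q : Q) :
    supExtension f ⟨{q}, singleton_nonempty q⟩ = f q :=
  sup'_singleton f

theorem supExtension_union [DecidableEq Q] (f : Q → S) (A B : {A : Finset Q // A.Nonempty}) :
    supExtension f ⟨A.1 ∪ B.1, A.2.mono subset_union_left⟩ =
      supExtension f A ⊔ supExtension f B :=
  sup'_union A.2 B.2 f

theorem supExtension_mono [Preorder Q] {f : Q → S} (hf : Monotone f)
    {A B : {A : Finset Q // A.Nonempty}} (hAB : ∀ a ∈ A.1, ∃ b ∈ B.1, a ≤ b) :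
    supExtension f A ≤ supExtension f B :=
  sup'_le A.2 f fun a ha =>
    let ⟨_, hb, hab⟩ := hAB a ha
    (hf hab).trans (le_sup' f hb)

theorem eq_supExtension_of_map_union [DecidableEq Q] {f : Q → S}
    {F : {A : Finset Q // A.Nonempty} → S}
    (hsingleton : ∀ q : Q, F ⟨{q}, singleton_nonempty q⟩ = f q)
    (hunion : ∀ A B : {A : Finset Q // A.Nonempty},
      F ⟨A.1 ∪ B.1, A.2.mono subset_union_left⟩ = F A ⊔ F B) :
    F = supExtension f := by
  funext ⟨A, hA⟩
  induction hA using Nonempty.cons_induction with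
  | singleton q => exact hsingleton q
  | cons q s hq hs ih =>
    have hcons : F ⟨cons q s hq, cons_nonempty hq⟩ =
        F ⟨{q} ∪ s, (singleton_nonempty q).mono subset_union_left⟩ := by
      simp only [cons_eq_insert, insert_eq]
    rw [hcons, hunion ⟨{q}, singleton_nonempty q⟩ ⟨s, hs⟩, hsingleton, ih]
    exact (sup'_cons (hb := hq) hs f).symm

end Finset

theorem exists_unique_semilattice_hom_extension_general {Q S : Type*} [PartialOrder Q]
    [DecidableEq Q] [SemilatticeSup S] (f : Q → S) (hmono : Monotone f) :
    ∃! F : {A : Finset Q // A.Nonempty} → S,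
      (∀ q : Q, F ⟨{q}, Finset.singleton_nonempty q⟩ = f q) ∧
      (∀ A B : {A : Finset Q // A.Nonempty},
        F ⟨A.1 ∪ B.1, A.2.mono Finset.subset_union_left⟩ = F A ⊔ F B) ∧
      (∀ A B : {A : Finset Q // A.Nonempty},
        (∀ a ∈ A.1, ∃ b ∈ B.1, a ≤ b) → F A ≤ F B) :=
  ⟨Finset.supExtension f,
    ⟨Finset.supExtension_singleton f, Finset.supExtension_union f,
      fun _ _ => Finset.supExtension_mono hmono⟩,
    fun _ ⟨hsingleton, hunion, _⟩ => Finset.eq_supExtension_of_map_union hsingleton hunion⟩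

/-- if `f : Q → S` is a monotone map from a poset `Q` to a join-semilattice
`S` whose image consists of join-irreducible elements, then there is a unique semilattice
homomorphism `F = f⊔` from `Q⊔` (the nonempty finite subsets of `Q`, with `A ≤ B` iff every
element of `A` is below some element of `B` and join given by union) to `S` extending `f`.
(Being a homomorphism is expressed by preserving joins and being monotone for the
`≤*`-preorder, so that `F` descends to the quotient `Q⊔`.) -/
theorem exists_unique_semilattice_hom_extension {Q S : Type*} [PartialOrder Q]
    [DecidableEq Q] [SemilatticeSup S] (f : Q → S) (hmono : Monotone f)
    (hirr : ∀ q : Q, ∀ y z : S, y ⊔ z = f q → y = f q ∨ z = f q) :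
    ∃! F : {A : Finset Q // A.Nonempty} → S,
      (∀ q : Q, F ⟨{q}, Finset.singleton_nonempty q⟩ = f q) ∧
      (∀ A B : {A : Finset Q // A.Nonempty},
        F ⟨A.1 ∪ B.1, A.2.mono Finset.subset_union_left⟩ = F A ⊔ F B) ∧
      (∀ A B : {A : Finset Q // A.Nonempty},
        (∀ a ∈ A.1, ∃ b ∈ B.1, a ≤ b) → F A ≤ F B) :=
  exists_unique_semilattice_hom_extension_general f hmono
end

section
/- Let S be a distributive join-semilattice and Q a partial order. If f : Q → S is an order embedding whose image consists of join-irreducible elements of S, then the induced semilattice homomorphism f⊔ : Q⊔ → S (sending a finite nonempty subset A of Q to the join of f over A) is an order embedding. -/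
theorem Finset.exists_le_of_le_sup' {ι α : Type*} [SemilatticeSup α] {a : α}
    (ha : ∀ y z : α, a ≤ y ⊔ z → a ≤ y ∨ a ≤ z) {s : Finset ι} (hs : s.Nonempty)
    (g : ι → α) (h : a ≤ s.sup' hs g) : ∃ i ∈ s, a ≤ g i := by
  induction hs using Finset.Nonempty.cons_induction with
  | singleton i => exact ⟨i, mem_singleton_self i, by simpa using h⟩
  | cons i s _ hs ih =>
    rw [sup'_cons hs] at h
    rcases ha _ _ h with hle | hle
    · exact ⟨i, mem_cons_self i s, hle⟩
    · obtain ⟨j, hj, hle⟩ := ih hle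
      exact ⟨j, mem_cons_of_mem hj, hle⟩

theorem joinHom_orderEmbedding_general {Q S : Type*} [PartialOrder Q] [SemilatticeSup S]
    (f : Q → S)
    (hemb : ∀ q r : Q, f q ≤ f r ↔ q ≤ r)
    (hirr : ∀ q : Q, ∀ y z : S, f q ≤ y ⊔ z → f q ≤ y ∨ f q ≤ z) :
    ∀ (A B : Finset Q) (hA : A.Nonempty) (hB : B.Nonempty),
      A.sup' hA f ≤ B.sup' hB f ↔ ∀ a ∈ A, ∃ b ∈ B, a ≤ b := by
  intro A B hA hB
  constructor
  · intro h a ha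
    obtain ⟨b, hb, hab⟩ :=
      Finset.exists_le_of_le_sup' (hirr a) hB f ((Finset.le_sup' f ha).trans h)
    exact ⟨b, hb, (hemb a b).1 hab⟩
  · intro h
    refine Finset.sup'_le hA f fun a ha => ?_
    obtain ⟨b, hb, hab⟩ := h a ha
    exact ((hemb a b).2 hab).trans (Finset.le_sup' f hb)

/-- if `S` is a distributive join-semilattice and `f : Q → S` is an order
embedding of a poset `Q` whose image consists of join-irreducible elements, then the
induced semilattice homomorphism `f⊔ : Q⊔ → S` (sending a nonempty finite subset `A` of
`Q` to the join of `f` over `A`) is an order embedding: `sup f A ≤ sup f B` iff `A ≤* B`. -/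
theorem joinHom_orderEmbedding {Q S : Type*} [PartialOrder Q] [SemilatticeSup S]
    (f : Q → S)
    (hemb : ∀ q r : Q, f q ≤ f r ↔ q ≤ r)
    (hdist : ∀ x y z : S, x ≤ y ⊔ z → ∃ y' z' : S, y' ≤ y ∧ z' ≤ z ∧ x = y' ⊔ z')
    (hirr : ∀ q : Q, ∀ y z : S, f q ≤ y ⊔ z → f q ≤ y ∨ f q ≤ z) :
    ∀ (A B : Finset Q) (hA : A.Nonempty) (hB : B.Nonempty),
      A.sup' hA f ≤ B.sup' hB f ↔ ∀ a ∈ A, ∃ b ∈ B, a ≤ b :=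
  joinHom_orderEmbedding_general f hemb hirr
end

section
/- For any poset Q, the semilattice Q⊔ of finite nonempty subsets of Q (with A ≤ B iff every element of A is below some element of B, join given by union, quotiented by equivalence), with a new bottom element adjoined, is a distributive lattice-like structure: it is a distributive join-semilattice whose join-irreducible non-bottom elements are exactly the classes of singleton subsets; in particular the poset of join-irreducible elements of Q⊔ is isomorphic to Q. -/
/-- The preorder `A ≤* B` on finite subsets of `Q`: every element of `A` is below some
element of `B`.  (The empty set is the adjoined bottom element.) -/
def FinsetLe {Q : Type*} [PartialOrder Q] (A B : Finset Q) : Prop :=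
  ∀ a ∈ A, ∃ b ∈ B, a ≤ b

/-- The associated equivalence (equality in the quotient `Q⊔` with bottom). -/
def FinsetEquiv {Q : Type*} [PartialOrder Q] (A B : Finset Q) : Prop :=
  FinsetLe A B ∧ FinsetLe B A

/-- The associated strict order. -/
def FinsetLt {Q : Type*} [PartialOrder Q] (A B : Finset Q) : Prop :=
  FinsetLe A B ∧ ¬ FinsetLe B A

/-!
Union is the join for `≤*`. Distributivity: split `A` according to whether an element is
covered by `B` or by `C`. A singleton `{q}` is join-prime, because an element of `B ∪ C`
above `q` lies in `B` or in `C`; so everything equivalent to it is join-irreducible.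
Conversely, if `A` is not equivalent to a singleton and `q` is maximal in `A`, then
`A = {q} ∪ A.erase q` with both parts strictly below `A`.
-/

namespace FinsetLe

variable {Q : Type*} [PartialOrder Q]

theorem refl (A : Finset Q) : FinsetLe A A :=
  fun a ha => ⟨a, ha, le_rfl⟩

theorem of_subset {A B : Finset Q} (h : A ⊆ B) : FinsetLe A B :=
  fun a ha => ⟨a, h ha, le_rfl⟩

theorem trans {A B C : Finset Q} (hAB : FinsetLe A B) (hBC : FinsetLe B C) : FinsetLe A C := by
  intro a ha
  obtain ⟨b, hb, hab⟩ := hAB a ha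
  obtain ⟨c, hc, hbc⟩ := hBC b hb
  exact ⟨c, hc, hab.trans hbc⟩

end FinsetLe

section

variable {Q : Type*} [PartialOrder Q]

theorem FinsetEquiv.refl (A : Finset Q) : FinsetEquiv A A :=
  ⟨FinsetLe.refl A, FinsetLe.refl A⟩

theorem finsetLe_singleton_iff {A : Finset Q} {q : Q} : FinsetLe A {q} ↔ ∀ a ∈ A, a ≤ q := by
  simp [FinsetLe]

theorem singleton_finsetLe_iff {q : Q} {B : Finset Q} : FinsetLe {q} B ↔ ∃ b ∈ B, q ≤ b := by
  simp [FinsetLe]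

theorem singleton_finsetLe_singleton_iff {q r : Q} : FinsetLe ({q} : Finset Q) {r} ↔ q ≤ r := by
  simp [FinsetLe]

variable [DecidableEq Q]

theorem singleton_finsetLe_union_iff {q : Q} {B C : Finset Q} :
    FinsetLe {q} (B ∪ C) ↔ FinsetLe {q} B ∨ FinsetLe {q} C := by
  simp only [singleton_finsetLe_iff, Finset.mem_union, or_and_right, exists_or]

theorem FinsetLe.exists_union_eq {A B C : Finset Q} (h : FinsetLe A (B ∪ C)) :
    ∃ B' C' : Finset Q, FinsetLe B' B ∧ FinsetLe C' C ∧ A = B' ∪ C' := by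
  classical
  refine ⟨A.filter (fun a => ∃ b ∈ B, a ≤ b), A.filter (fun a => ∃ c ∈ C, a ≤ c),
    fun a ha => (Finset.mem_filter.1 ha).2, fun a ha => (Finset.mem_filter.1 ha).2, ?_⟩
  rw [← Finset.filter_or, Finset.filter_true_of_mem]
  intro a ha
  simpa only [Finset.mem_union, or_and_right, exists_or] using h a ha

theorem not_exists_finsetLt_union_of_finsetEquiv_singleton {A : Finset Q} {q : Q}
    (hA : FinsetEquiv A {q}) :
    ¬ ∃ B C : Finset Q, FinsetLt B A ∧ FinsetLt C A ∧ FinsetEquiv A (B ∪ C) := by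
  rintro ⟨B, C, hB, hC, hABC, -⟩
  rcases singleton_finsetLe_union_iff.1 (hA.2.trans hABC) with hqB | hqC
  · exact hB.2 (hA.1.trans hqB)
  · exact hC.2 (hA.1.trans hqC)

theorem exists_finsetLt_union_of_forall_not_finsetEquiv_singleton {A : Finset Q}
    (hA : A.Nonempty) (hsingle : ∀ q : Q, ¬ FinsetEquiv A {q}) :
    ∃ B C : Finset Q, FinsetLt B A ∧ FinsetLt C A ∧ FinsetEquiv A (B ∪ C) := by
  obtain ⟨q, hqA, hqmax⟩ := A.exists_maximal hA
  have hq_le_A : FinsetLe {q} A := singleton_finsetLe_iff.2 ⟨q, hqA, le_rfl⟩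
  have hA_not_le_erase : ¬ FinsetLe A (A.erase q) := by
    intro h
    obtain ⟨c, hc, hqc⟩ := h q hqA
    exact Finset.ne_of_mem_erase hc (le_antisymm (hqmax (Finset.mem_of_mem_erase hc) hqc) hqc)
  refine ⟨{q}, A.erase q, ⟨hq_le_A, fun h => hsingle q ⟨h, hq_le_A⟩⟩,
    ⟨FinsetLe.of_subset (A.erase_subset q), hA_not_le_erase⟩, ?_⟩
  rw [← Finset.insert_eq, Finset.insert_erase hqA]
  exact FinsetEquiv.refl A

end

/-- for any poset `Q`, the semilattice `Q⊔` of finite subsets of `Q`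
(nonempty finite subsets with a bottom `∅` adjoined), with `≤*` and join `∪`, is a
distributive join-semilattice whose join-irreducible non-bottom elements are exactly the
classes of singletons; in particular its poset of join-irreducible elements is isomorphic
to `Q` via `q ↦ {q}`. -/
theorem finset_semilattice_distributive_irreducibles {Q : Type*} [PartialOrder Q]
    [DecidableEq Q] :
    (∀ A B C : Finset Q, FinsetLe A (B ∪ C) →
        ∃ B' C' : Finset Q, FinsetLe B' B ∧ FinsetLe C' C ∧ FinsetEquiv A (B' ∪ C')) ∧
      (∀ A : Finset Q, A.Nonempty →
        ((¬ ∃ B C : Finset Q, FinsetLt B A ∧ FinsetLt C A ∧ FinsetEquiv A (B ∪ C)) ↔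
          ∃ q : Q, FinsetEquiv A {q})) ∧
      (∀ q r : Q, q ≤ r ↔ FinsetLe ({q} : Finset Q) {r}) := by
  refine ⟨?_, ?_, fun q r => singleton_finsetLe_singleton_iff.symm⟩
  · intro A B C h
    obtain ⟨B', C', hB', hC', rfl⟩ := h.exists_union_eq
    exact ⟨B', C', hB', hC', FinsetEquiv.refl _⟩
  · intro A hA
    constructor
    · intro hirr
      by_contra! hsingle
      exact hirr (exists_finsetLt_union_of_forall_not_finsetEquiv_singleton hA hsingle)
    · rintro ⟨q, hq⟩
      exact not_exists_finsetLt_union_of_finsetEquiv_singleton hq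
end

section
/- If Q is a well-founded partial order, then the semilattice Q⊔ of finite nonempty subsets of Q ordered by A ≤ B iff every element of A is below some element of B is also well-founded. -/
/-!
Send a finite set to the multiset of its maximal elements. If `A <* B`, then after cancelling the
maxima common to `A` and `B`, every remaining maximum of `A` lies strictly below a remaining
maximum of `B`, and some maximum of `B` remains. This is a descent in the Dershowitz–Manna
multiset order, which is well-founded over a well-founded order.
-/

namespace Finset

variable {α : Type*} [PartialOrder α] {s t : Finset α} {a : α}

open scoped Classical in
noncomputable def maxima (s : Finset α) : Finset α := {a ∈ s | Maximal (· ∈ s) a}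

lemma mem_maxima : a ∈ s.maxima ↔ Maximal (· ∈ s) a := by
  classical
  simp only [maxima, mem_filter, and_iff_right_iff_imp]
  exact Maximal.prop

lemma exists_le_mem_maxima (ha : a ∈ s) : ∃ b ∈ s.maxima, a ≤ b := by
  obtain ⟨b, hab, hb⟩ := s.exists_le_maximal ha
  exact ⟨b, mem_maxima.2 hb, hab⟩

theorem isDershowitzMannaLT_maxima (hst : ∀ a ∈ s, ∃ b ∈ t, a ≤ b)
    (hts : ¬ ∀ b ∈ t, ∃ a ∈ s, b ≤ a) :
    Multiset.IsDershowitzMannaLT s.maxima.val t.maxima.val := by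
  classical
  refine ⟨s.maxima.val ∩ t.maxima.val, s.maxima.val - t.maxima.val,
    t.maxima.val - s.maxima.val, ?nonempty, ?_, ?_, ?dominated⟩
  case nonempty =>
    rw [Multiset.empty_eq_zero, Ne, tsub_eq_zero_iff_le, val_le_iff]
    refine fun hsub ↦ hts fun b hb ↦ ?_
    obtain ⟨m, hm, hbm⟩ := exists_le_mem_maxima hb
    exact ⟨m, (mem_maxima.1 (hsub hm)).prop, hbm⟩
  · rw [add_comm, Multiset.sub_add_inter]
  · rw [add_comm, Multiset.inter_comm, Multiset.sub_add_inter]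
  case dominated =>
    simp only [← sdiff_val, mem_val, mem_sdiff, mem_maxima]
    rintro y ⟨hys, hyt⟩
    obtain ⟨b, hb, hyb⟩ := hst y hys.prop
    obtain ⟨m, hm, hbm⟩ := exists_le_mem_maxima hb
    have hym : y < m :=
      (hyb.trans hbm).lt_of_ne (by rintro rfl; exact hyt (mem_maxima.1 hm))
    exact ⟨m, ⟨mem_maxima.1 hm, fun hms ↦ hys.not_gt hms.prop hym⟩, hym⟩

end Finset

/-- if `Q` is a well-founded poset, then the semilattice `Q⊔` of nonempty
finite subsets of `Q`, ordered by `A ≤ B` iff every element of `A` is below some element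
of `B`, is well-founded (its strict order admits no infinite descending chain). -/
theorem finset_wellFounded {Q : Type*} [PartialOrder Q]
    (hwf : WellFounded ((· < ·) : Q → Q → Prop)) :
    WellFounded (fun A B : {A : Finset Q // A.Nonempty} =>
      (∀ a ∈ A.1, ∃ b ∈ B.1, a ≤ b) ∧ ¬ (∀ b ∈ B.1, ∃ a ∈ A.1, b ≤ a)) := by
  have : WellFoundedLT Q := ⟨hwf⟩
  exact Subrelation.wf (fun h ↦ Finset.isDershowitzMannaLT_maxima h.1 h.2)
    (InvImage.wf (fun A : {A : Finset Q // A.Nonempty} ↦ A.1.maxima.val)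
      Multiset.wellFounded_isDershowitzMannaLT)
end

section
/- If Q is a well quasi-order, then the set of nonempty finite subsets of Q with the preorder A ≤ B iff every element of A is below some element of B is also a well quasi-order. -/
/-! Enumerate each finite set as a list. By Higman's lemma some list embeds into a later one
up to `≤`, and every element of the earlier set is then below its image in the later set. -/

theorem List.SublistForall₂.exists_mem_of_mem {α β : Type*} {R : α → β → Prop}
    {l₁ : List α} {l₂ : List β} (h : List.SublistForall₂ R l₁ l₂) {a : α} (ha : a ∈ l₁) :
    ∃ b ∈ l₂, R a b := by
  obtain ⟨l, hl, hsub⟩ := List.sublistForall₂_iff.mp h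
  obtain ⟨i, hi, rfl⟩ := List.getElem_of_mem ha
  have hlen := hl.length_eq
  exact ⟨l[i], hsub.subset (List.getElem_mem _), hl.get hi (hlen ▸ hi)⟩

/-- **Higman's lemma**. -/
theorem WellQuasiOrdered.sublistForall₂ {α : Type*} {r : α → α → Prop} [IsPreorder α r]
    (h : WellQuasiOrdered r) : WellQuasiOrdered (List.SublistForall₂ r) := by
  rw [← Set.partiallyWellOrderedOn_univ_iff] at h ⊢
  simpa using h.partiallyWellOrderedOn_sublistForall₂ r

theorem WellQuasiOrdered.finset_domination {α : Type*} {r : α → α → Prop} [IsPreorder α r]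
    (h : WellQuasiOrdered r) :
    WellQuasiOrdered (fun s t : Finset α => ∀ a ∈ s, ∃ b ∈ t, r a b) := fun F => by
  obtain ⟨m, n, hmn, hsub⟩ := h.sublistForall₂ (fun k => (F k).toList)
  exact ⟨m, n, hmn, fun a ha => by
    simpa using hsub.exists_mem_of_mem (Finset.mem_toList.mpr ha)⟩

/-- if `Q` is a well quasi-order (every infinite sequence contains an
increasing pair), then the nonempty finite subsets of `Q`, with `A ≤ B` iff every element
of `A` is below some element of `B`, form a well quasi-order. -/
theorem finset_wqo {Q : Type*} [Preorder Q]
    (hwqo : ∀ f : ℕ → Q, ∃ m n : ℕ, m < n ∧ f m ≤ f n) :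
    ∀ F : ℕ → {A : Finset Q // A.Nonempty},
      ∃ m n : ℕ, m < n ∧ ∀ a ∈ (F m).1, ∃ b ∈ (F n).1, a ≤ b :=
  fun F => WellQuasiOrdered.finset_domination (r := (· ≤ ·)) hwqo (fun k => (F k).1)
end

section
/- Let Q be a preorder and let T(Q) be the set of finite Q-labeled trees with the h-preorder: (T,t) ≤_h (V,v) iff there is a monotone map f from T to V (with respect to the tree order) such that t(τ) ≤ v(f(τ)) for all τ ∈ T. If Q is a well quasi-order, then (T(Q), ≤_h) is a well quasi-order. -/
/-- A finite `Q`-labeled rooted tree: a finite nonempty prefix-closed set of finite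
strings of naturals, together with a labeling. -/
structure QTree (Q : Type*) where
  nodes : Finset (List ℕ)
  nonempty : nodes.Nonempty
  prefix_closed : ∀ σ ∈ nodes, ∀ τ : List ℕ, τ <+: σ → τ ∈ nodes
  label : List ℕ → Q

/-- The h-preorder on finite `Q`-labeled trees: `T ≤_h V` iff there is a monotone map
(w.r.t. the prefix/tree order) from `T` to `V` which is nondecreasing on labels. -/
def QTree.hle {Q : Type*} [Preorder Q] (T V : QTree Q) : Prop :=
  ∃ f : List ℕ → List ℕ,
    (∀ σ ∈ T.nodes, f σ ∈ V.nodes) ∧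
    (∀ σ ∈ T.nodes, ∀ τ ∈ T.nodes, σ <+: τ → f σ <+: f τ) ∧
    (∀ σ ∈ T.nodes, T.label σ ≤ V.label (f σ))

/-!
Nash-Williams' minimal bad sequence argument. Choose a bad sequence whose trees have, term by
term, as few nodes as possible. The immediate subtrees of its members then form a well
quasi-order: a bad sequence of them could be spliced in after an initial segment, giving a bad
sequence that is smaller at one position. By Higman's lemma the finite lists of immediate
subtrees are then well quasi-ordered, in particular under domination, and together with a good
pair of root labels this yields `Tₘ ≤_h Tₙ` for some `m < n`: send the root of `Tₘ` to the root
of `Tₙ` and each immediate subtree of `Tₘ` into `Tₙ`.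
-/

open Set Set.PartiallyWellOrderedOn

theorem List.SublistForall₂.exists_of_mem {α β : Type*} {r : α → β → Prop} {l₁ : List α}
    {l₂ : List β} (h : List.SublistForall₂ r l₁ l₂) {a : α} (ha : a ∈ l₁) : ∃ b ∈ l₂, r a b := by
  induction h with
  | nil => simp at ha
  | cons hr _ ih =>
    rcases List.mem_cons.1 ha with rfl | ha
    · exact ⟨_, List.mem_cons_self, hr⟩
    · obtain ⟨b, hb, hab⟩ := ih ha
      exact ⟨b, List.mem_cons_of_mem _ hb, hab⟩
  | cons_right _ ih =>
    obtain ⟨b, hb, hab⟩ := ih ha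
    exact ⟨b, List.mem_cons_of_mem _ hb, hab⟩

theorem Set.partiallyWellOrderedOn_lt_rank_of_isMinBadSeq {α : Type*} {r : α → α → Prop}
    [IsTrans α r] {rk : α → ℕ} {f : ℕ → α} (hf : IsBadSeq r univ f)
    (hmin : ∀ n, IsMinBadSeq r rk univ n f) :
    {a | ∃ n, r a (f n) ∧ rk a < rk (f n)}.PartiallyWellOrderedOn r := by
  rw [iff_forall_not_isBadSeq]
  rintro g ⟨hg, hg_bad⟩
  choose idx hidx using hg
  set k₀ := Function.argmin idx
  set N := idx k₀
  have hN : ∀ k, N ≤ idx k := fun k => Function.argmin_le idx k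
  refine hmin N (fun m => if m < N then f m else g (k₀ + (m - N)))
    (fun m hm => (if_pos hm).symm) (by simpa using (hidx k₀).2) ⟨fun _ => mem_univ _, ?_⟩
  intro a b hab hr
  by_cases hb : b < N
  · simp only [if_pos (hab.trans hb), if_pos hb] at hr
    exact hf.2 a b hab hr
  by_cases ha : a < N
  · simp only [if_pos ha, if_neg hb] at hr
    exact hf.2 a _ (ha.trans_le (hN _)) (_root_.trans hr (hidx _).1)
  · simp only [if_neg ha, if_neg hb] at hr
    exact hg_bad _ _ (by omega) hr

namespace QTree

variable {Q : Type*}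

theorem nil_mem (T : QTree Q) : [] ∈ T.nodes := by
  obtain ⟨σ, hσ⟩ := T.nonempty
  exact T.prefix_closed σ hσ [] List.nil_prefix

theorem singleton_mem_of_cons_mem {T : QTree Q} {i : ℕ} {ρ : List ℕ} (h : i :: ρ ∈ T.nodes) :
    [i] ∈ T.nodes :=
  T.prefix_closed _ h _ (List.cons_prefix_cons.2 ⟨rfl, List.nil_prefix⟩)

/-- The subtree of `T` above the node `[i]`; the root `[]` is added so that it is a tree even when
`[i] ∉ T.nodes`. -/
noncomputable def subtree (T : QTree Q) (i : ℕ) : QTree Q where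
  nodes := insert [] (T.nodes.preimage (List.cons i) List.cons_injective.injOn)
  nonempty := ⟨[], Finset.mem_insert_self _ _⟩
  prefix_closed σ hσ τ hτσ := by
    simp only [Finset.mem_insert, Finset.mem_preimage] at hσ ⊢
    rcases hσ with rfl | hσ
    · exact Or.inl (List.prefix_nil.1 hτσ)
    · exact Or.inr (T.prefix_closed _ hσ _ (List.cons_prefix_cons.2 ⟨rfl, hτσ⟩))
  label ρ := T.label (i :: ρ)

theorem mem_subtree_nodes {T : QTree Q} {i : ℕ} (hi : [i] ∈ T.nodes) {ρ : List ℕ} :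
    ρ ∈ (T.subtree i).nodes ↔ i :: ρ ∈ T.nodes := by
  simp only [subtree, Finset.mem_insert, Finset.mem_preimage, or_iff_right_iff_imp]
  rintro rfl
  exact hi

theorem card_subtree_lt {T : QTree Q} {i : ℕ} (hi : [i] ∈ T.nodes) :
    (T.subtree i).nodes.card < T.nodes.card := by
  rw [← Finset.card_map ⟨List.cons i, List.cons_injective⟩]
  refine Finset.card_lt_card ((Finset.ssubset_iff_of_subset ?_).2 ⟨[], T.nil_mem, by simp⟩)
  intro σ hσ
  obtain ⟨ρ, hρ, rfl⟩ := Finset.mem_map.1 hσ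
  exact (mem_subtree_nodes hi).1 hρ

noncomputable def children (T : QTree Q) : List (QTree Q) :=
  (T.nodes.preimage (fun i => [i]) List.singleton_injective.injOn).toList.map T.subtree

theorem mem_children {T t : QTree Q} : t ∈ T.children ↔ ∃ i, [i] ∈ T.nodes ∧ T.subtree i = t := by
  simp [children]

variable [Preorder Q]

theorem hle_refl (T : QTree Q) : T.hle T :=
  ⟨id, fun _ h => h, fun _ _ _ _ h => h, fun _ _ => le_rfl⟩

theorem hle_trans {T U V : QTree Q} : T.hle U → U.hle V → T.hle V := by
  rintro ⟨f, hf_mem, hf_mono, hf_label⟩ ⟨g, hg_mem, hg_mono, hg_label⟩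
  refine ⟨g ∘ f, fun σ hσ => hg_mem _ (hf_mem σ hσ), fun σ hσ τ hτ h => ?_,
    fun σ hσ => (hf_label σ hσ).trans (hg_label _ (hf_mem σ hσ))⟩
  exact hg_mono _ (hf_mem σ hσ) _ (hf_mem τ hτ) (hf_mono σ hσ τ hτ h)

instance : IsPreorder (QTree Q) hle where
  refl := hle_refl
  trans _ _ _ := hle_trans

theorem subtree_hle {T : QTree Q} {i : ℕ} (hi : [i] ∈ T.nodes) : (T.subtree i).hle T :=
  ⟨List.cons i, fun _ hρ => (mem_subtree_nodes hi).1 hρ,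
    fun _ _ _ _ h => List.cons_prefix_cons.2 ⟨rfl, h⟩, fun _ _ => le_rfl⟩

theorem hle_of_label_nil_le_of_subtree_hle {T V : QTree Q} (hroot : T.label [] ≤ V.label [])
    (hsub : ∀ i, [i] ∈ T.nodes → (T.subtree i).hle V) : T.hle V := by
  choose! F hF_mem hF_mono hF_label using hsub
  let f : List ℕ → List ℕ
    | [] => []
    | i :: ρ => F i ρ
  have hsub_mem {i ρ} (h : i :: ρ ∈ T.nodes) : ρ ∈ (T.subtree i).nodes :=
    (mem_subtree_nodes (singleton_mem_of_cons_mem h)).2 h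
  refine ⟨f, ?_, ?_, ?_⟩
  · rintro (_ | ⟨i, ρ⟩) hτ
    · exact V.nil_mem
    · exact hF_mem i (singleton_mem_of_cons_mem hτ) ρ (hsub_mem hτ)
  · rintro (_ | ⟨i, ρ⟩) hσ τ hτ ⟨δ, rfl⟩
    · exact List.nil_prefix
    · exact hF_mono i (singleton_mem_of_cons_mem hσ) ρ (hsub_mem hσ) (ρ ++ δ) (hsub_mem hτ)
        ⟨δ, rfl⟩
  · rintro (_ | ⟨i, ρ⟩) hτ
    · exact hroot
    · exact hF_label i (singleton_mem_of_cons_mem hτ) ρ (hsub_mem hτ)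

theorem wellQuasiOrdered_hle (hQ : WellQuasiOrdered (α := Q) (· ≤ ·)) :
    WellQuasiOrdered (hle (Q := Q)) := by
  rw [← partiallyWellOrderedOn_univ_iff, iff_not_exists_isMinBadSeq fun T : QTree Q => T.nodes.card]
  rintro ⟨f, hf, hmin⟩
  have hchildren : {t | ∃ n, t ∈ (f n).children}.PartiallyWellOrderedOn hle :=
    (partiallyWellOrderedOn_lt_rank_of_isMinBadSeq hf hmin).mono fun t ⟨n, ht⟩ => by
      obtain ⟨i, hi, rfl⟩ := mem_children.1 ht
      exact ⟨n, subtree_hle hi, card_subtree_lt hi⟩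
  obtain ⟨m, n, hmn, hroot, hsub⟩ :=
    ((partiallyWellOrderedOn_univ_iff.2 hQ).prod
      (partiallyWellOrderedOn_sublistForall₂ hle hchildren)).exists_lt
      (f := fun n => ((f n).label [], (f n).children)) fun n => ⟨mem_univ _, fun _ ht => ⟨n, ht⟩⟩
  refine hf.2 m n hmn (hle_of_label_nil_le_of_subtree_hle hroot fun i hi => ?_)
  obtain ⟨t, ht, hle_t⟩ := hsub.exists_of_mem (mem_children.2 ⟨i, hi, rfl⟩)
  obtain ⟨j, hj, rfl⟩ := mem_children.1 ht
  exact hle_trans hle_t (subtree_hle hj)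

end QTree

/-- labeled Kruskal theorem: if `Q` is a well quasi-order, then the finite
`Q`-labeled trees with the h-preorder form a well quasi-order. -/
theorem qtree_wqo {Q : Type*} [Preorder Q]
    (hwqo : ∀ f : ℕ → Q, ∃ m n : ℕ, m < n ∧ f m ≤ f n) :
    ∀ T : ℕ → QTree Q, ∃ m n : ℕ, m < n ∧ (T m).hle (T n) :=
  QTree.wellQuasiOrdered_hle hwqo
end

section
/- Any two h-equivalent minimal Q-forests are isomorphic (as labeled forests). -/
/-!
Let `f : F → G` and `g : G → F` witness the equivalence. The image of the self-map `g ∘ f`,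
with the prefix order induced from `F` and the labels of `F`, is realised by a forest
h-equivalent to `F`, so minimality of `F` makes `g ∘ f` injective; then `f` is injective, and
minimality of `G` gives `|G| ≤ |F|`, so `f` is a bijection. Some iterate of the permutation
`g ∘ f` of the nodes of `F` is the identity, hence `g ∘ f` reflects the prefix order, and the
labels, which can only grow along an orbit, are constant on it.
-/

/-- A finite `Q`-labeled forest: a finite set of nonempty finite strings of naturals,
closed under nonempty prefixes, together with a labeling. -/
structure QForest (Q : Type*) where
  nodes : Finset (List ℕ)
  not_root : ([] : List ℕ) ∉ nodes
  prefix_closed : ∀ σ ∈ nodes, ∀ τ : List ℕ, τ <+: σ → τ ≠ [] → τ ∈ nodes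
  label : List ℕ → Q

/-- The h-preorder on finite `Q`-labeled forests: `F ≤_h G` iff there is a monotone map
(w.r.t. the prefix order) from `F` to `G` which is nondecreasing on labels. -/
def QForest.hle {Q : Type*} [Preorder Q] (F G : QForest Q) : Prop :=
  ∃ f : List ℕ → List ℕ,
    (∀ σ ∈ F.nodes, f σ ∈ G.nodes) ∧
    (∀ σ ∈ F.nodes, ∀ τ ∈ F.nodes, σ <+: τ → f σ <+: f τ) ∧
    (∀ σ ∈ F.nodes, F.label σ ≤ G.label (f σ))

/-- A `Q`-forest is minimal if it is not h-equivalent to a `Q`-forest of strictly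
smaller cardinality. -/
def QForest.Minimal {Q : Type*} [Preorder Q] (F : QForest Q) : Prop :=
  ∀ G : QForest Q, F.hle G → G.hle F → F.nodes.card ≤ G.nodes.card

namespace List

variable {α : Type*}

theorem nodup_inits : ∀ l : List α, l.inits.Nodup
  | [] => nodup_singleton _
  | a :: l => by
    rw [inits_cons, nodup_cons]
    exact ⟨by simp, (nodup_inits l).map (cons_injective (a := a))⟩

theorem exists_inits_eq_append : ∀ l : List α, ∃ l', l.inits = l' ++ [l]
  | [] => ⟨[], rfl⟩
  | a :: l => by
    obtain ⟨l', h⟩ := exists_inits_eq_append l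
    exact ⟨[] :: l'.map (a :: ·), by simp [h]⟩

theorem IsPrefix.inits {l₁ l₂ : List α} (h : l₁ <+: l₂) : l₁.inits <+: l₂.inits := by
  obtain ⟨t, rfl⟩ := h
  rw [inits_append]
  exact prefix_append _ _

theorem eq_of_append_singleton_prefix {L l₁ l₂ : List α} {a : α} (hL : L.Nodup)
    (h₁ : l₁ ++ [a] <+: L) (h₂ : l₂ ++ [a] <+: L) : l₁ = l₂ := by
  wlog hle : l₁.length ≤ l₂.length generalizing l₁ l₂
  · exact (this h₂ h₁ (by omega)).symm
  have h : l₁ ++ [a] <+: l₂ ++ [a] := prefix_of_prefix_length_le h₁ h₂ (by simpa using hle)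
  rcases prefix_concat_iff.mp h with h | h
  · exact append_inj_left' h rfl
  · have hnd := nodup_append.mp (hL.sublist h₂.sublist)
    exact absurd rfl (hnd.2.2 a (h.subset (mem_concat_self ..)) a (mem_singleton_self a))

end List

namespace Set

variable {α β : Type*} {s : Set α} {f : α → α}

theorem MapsTo.exists_iterate_eqOn_id [Finite s] (hf : MapsTo f s s) (hinj : InjOn f s) :
    ∃ n, 0 < n ∧ EqOn f^[n] id s := by
  have := Fintype.ofFinite s
  refine ⟨(Fintype.card s).factorial, Nat.factorial_pos _, fun a ha => ?_⟩
  have h := Function.injective_iff_iterate_factorial_card_eq_id.mp (hf.restrict_inj.mpr hinj)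
  rw [hf.iterate_restrict] at h
  exact congrArg Subtype.val (congrFun h ⟨a, ha⟩)

theorem MapsTo.rel_iterate {r : α → α → Prop} (hf : MapsTo f s s)
    (hr : ∀ a ∈ s, ∀ b ∈ s, r a b → r (f a) (f b)) {a b : α} (ha : a ∈ s) (hb : b ∈ s)
    (hab : r a b) (n : ℕ) : r (f^[n] a) (f^[n] b) := by
  induction n with
  | zero => exact hab
  | succ n ih =>
    rw [Function.iterate_succ_apply', Function.iterate_succ_apply']
    exact hr _ (hf.iterate n ha) _ (hf.iterate n hb) ih

theorem MapsTo.rel_of_rel_apply [Finite s] {r : α → α → Prop} (hf : MapsTo f s s)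
    (hinj : InjOn f s) (hr : ∀ a ∈ s, ∀ b ∈ s, r a b → r (f a) (f b)) {a b : α}
    (ha : a ∈ s) (hb : b ∈ s) (hab : r (f a) (f b)) : r a b := by
  obtain ⟨n, hn, hid⟩ := hf.exists_iterate_eqOn_id hinj
  obtain ⟨m, rfl⟩ := Nat.exists_eq_succ_of_ne_zero hn.ne'
  have := hf.rel_iterate hr (hf ha) (hf hb) hab m
  rwa [← Function.iterate_succ_apply, ← Function.iterate_succ_apply, hid ha, hid hb] at this

theorem MapsTo.le_iterate [Preorder β] {ℓ : α → β} (hf : MapsTo f s s)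
    (hℓ : ∀ a ∈ s, ℓ a ≤ ℓ (f a)) {a : α} (ha : a ∈ s) (n : ℕ) : ℓ a ≤ ℓ (f^[n] a) := by
  induction n with
  | zero => exact le_rfl
  | succ n ih =>
    rw [Function.iterate_succ_apply']
    exact ih.trans (hℓ _ (hf.iterate n ha))

theorem MapsTo.apply_le_of_le_apply [Finite s] [Preorder β] {ℓ : α → β} (hf : MapsTo f s s)
    (hinj : InjOn f s) (hℓ : ∀ a ∈ s, ℓ a ≤ ℓ (f a)) {a : α} (ha : a ∈ s) : ℓ (f a) ≤ ℓ a := by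
  obtain ⟨n, hn, hid⟩ := hf.exists_iterate_eqOn_id hinj
  obtain ⟨m, rfl⟩ := Nat.exists_eq_succ_of_ne_zero hn.ne'
  have := hf.le_iterate hℓ (hf ha) m
  rwa [← Function.iterate_succ_apply, hid ha] at this

end Set

namespace QForest

variable {Q : Type*}

section OfFinset

variable (S : Finset (List ℕ))

def ancestorsIn (s : List ℕ) : List (List ℕ) := s.inits.filter (· ∈ S)

noncomputable def ancestorCode (s : List ℕ) : List ℕ := (ancestorsIn S s).map Encodable.encode

def decodeLast (c : List ℕ) : List ℕ := (c.getLast?.bind Encodable.decode).getD []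

variable {S}

theorem mem_ancestorsIn {s t : List ℕ} : t ∈ ancestorsIn S s ↔ t ∈ S ∧ t <+: s := by
  simp [ancestorsIn, List.mem_inits, and_comm]

theorem ancestorsIn_prefix {r s : List ℕ} (h : r <+: s) : ancestorsIn S r <+: ancestorsIn S s :=
  h.inits.filter _

theorem nodup_ancestorsIn (s : List ℕ) : (ancestorsIn S s).Nodup :=
  (List.nodup_inits s).filter _

theorem exists_ancestorsIn_eq_append {s : List ℕ} (hs : s ∈ S) :
    ∃ l, ancestorsIn S s = l ++ [s] := by
  obtain ⟨l, hl⟩ := List.exists_inits_eq_append s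
  exact ⟨l.filter (· ∈ S), by simp [ancestorsIn, hl, hs]⟩

theorem decodeLast_ancestorCode {s : List ℕ} (hs : s ∈ S) :
    decodeLast (ancestorCode S s) = s := by
  obtain ⟨l, hl⟩ := exists_ancestorsIn_eq_append hs
  simp [decodeLast, ancestorCode, hl]

theorem ancestorCode_ne_nil {s : List ℕ} (hs : s ∈ S) : ancestorCode S s ≠ [] := by
  obtain ⟨l, hl⟩ := exists_ancestorsIn_eq_append hs
  simp [ancestorCode, hl]

theorem prefix_of_ancestorCode_prefix {r s : List ℕ} (hr : r ∈ S)
    (h : ancestorCode S r <+: ancestorCode S s) : r <+: s := by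
  obtain ⟨l, hl, he⟩ := List.prefix_map_iff.mp h
  have hrl : ancestorsIn S r = l := List.map_injective_iff.mpr Encodable.encode_injective he
  obtain ⟨l₀, h₀⟩ := exists_ancestorsIn_eq_append hr
  have : r ∈ ancestorsIn S s := hl.subset (hrl ▸ h₀ ▸ List.mem_concat_self ..)
  exact (mem_ancestorsIn.mp this).2

theorem exists_ancestorCode_eq_of_prefix {s c : List ℕ} (hc : c <+: ancestorCode S s)
    (hne : c ≠ []) : ∃ r ∈ S, ancestorCode S r = c := by
  obtain ⟨l, hl, rfl⟩ := List.prefix_map_iff.mp hc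
  obtain ⟨l₀, r, rfl⟩ := (List.eq_nil_or_concat' l).resolve_left (by rintro rfl; simp at hne)
  obtain ⟨hr, hrs⟩ := mem_ancestorsIn.mp (hl.subset (List.mem_concat_self ..))
  obtain ⟨l₁, h₁⟩ := exists_ancestorsIn_eq_append hr
  have : l₁ = l₀ :=
    List.eq_of_append_singleton_prefix (nodup_ancestorsIn s) (h₁ ▸ ancestorsIn_prefix hrs) hl
  exact ⟨r, hr, by rw [ancestorCode, h₁, this]⟩

variable (S)

/-- The forest whose nodes are the elements of `S` under the induced prefix order: `s ∈ S` is
represented by the string of codes of its ancestors in `S`, and decoding the last letter of that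
string recovers `s`. -/
noncomputable def ofFinset (ℓ : List ℕ → Q) : QForest Q where
  nodes := S.image (ancestorCode S)
  not_root h := by
    obtain ⟨s, hs, he⟩ := Finset.mem_image.mp h
    exact ancestorCode_ne_nil hs he
  prefix_closed σ hσ τ hτ hne := by
    obtain ⟨s, -, rfl⟩ := Finset.mem_image.mp hσ
    obtain ⟨r, hr, rfl⟩ := exists_ancestorCode_eq_of_prefix hτ hne
    exact Finset.mem_image_of_mem _ hr
  label := ℓ ∘ decodeLast

theorem card_ofFinset (ℓ : List ℕ → Q) : (ofFinset S ℓ).nodes.card = S.card :=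
  Finset.card_image_of_injOn fun _ hr _ hs h =>
    (decodeLast_ancestorCode hr).symm.trans (h ▸ decodeLast_ancestorCode hs)

end OfFinset

section Hom

variable [Preorder Q]

structure IsHom (F G : QForest Q) (f : List ℕ → List ℕ) : Prop where
  mapsTo : Set.MapsTo f F.nodes G.nodes
  prefix_mono : ∀ σ ∈ F.nodes, ∀ τ ∈ F.nodes, σ <+: τ → f σ <+: f τ
  label_le : ∀ σ ∈ F.nodes, F.label σ ≤ G.label (f σ)

theorem hle_iff_exists_isHom {F G : QForest Q} : F.hle G ↔ ∃ f, F.IsHom G f :=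
  ⟨fun ⟨f, h₁, h₂, h₃⟩ => ⟨f, fun _ => h₁ _, h₂, h₃⟩,
    fun ⟨f, h⟩ => ⟨f, fun _ hσ => h.mapsTo hσ, h.prefix_mono, h.label_le⟩⟩

theorem IsHom.comp {F G H : QForest Q} {f g : List ℕ → List ℕ} (hg : G.IsHom H g)
    (hf : F.IsHom G f) : F.IsHom H (g ∘ f) where
  mapsTo := hg.mapsTo.comp hf.mapsTo
  prefix_mono σ hσ τ hτ h :=
    hg.prefix_mono _ (hf.mapsTo hσ) _ (hf.mapsTo hτ) (hf.prefix_mono σ hσ τ hτ h)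
  label_le σ hσ := (hf.label_le σ hσ).trans (hg.label_le _ (hf.mapsTo hσ))

theorem isHom_ofFinset_decodeLast {S : Finset (List ℕ)} {G : QForest Q} (hS : S ⊆ G.nodes) :
    (ofFinset S G.label).IsHom G decodeLast where
  mapsTo := by
    rintro _ hσ
    obtain ⟨s, hs, rfl⟩ := Finset.mem_image.mp hσ
    simpa [decodeLast_ancestorCode hs] using hS hs
  prefix_mono := by
    rintro _ hσ _ hτ h
    obtain ⟨r, hr, rfl⟩ := Finset.mem_image.mp hσ
    obtain ⟨s, hs, rfl⟩ := Finset.mem_image.mp hτ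
    rw [decodeLast_ancestorCode hr, decodeLast_ancestorCode hs]
    exact prefix_of_ancestorCode_prefix hr h
  label_le _ _ := le_rfl

theorem IsHom.isHom_ofFinset_image {F G : QForest Q} {f : List ℕ → List ℕ} (hf : F.IsHom G f) :
    F.IsHom (ofFinset (F.nodes.image f) G.label) (ancestorCode (F.nodes.image f) ∘ f) where
  mapsTo σ hσ := Finset.mem_image_of_mem _ (Finset.mem_image_of_mem _ hσ)
  prefix_mono σ hσ τ hτ h := (ancestorsIn_prefix (hf.prefix_mono σ hσ τ hτ h)).map _
  label_le σ hσ := by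
    simpa [ofFinset, decodeLast_ancestorCode (Finset.mem_image_of_mem f hσ)] using hf.label_le σ hσ

/-- `F` is h-equivalent to the realisation of its image under `h`, which has fewer nodes as soon
as `h` identifies two nodes. -/
theorem Minimal.injOn_of_isHom {F : QForest Q} {h : List ℕ → List ℕ} (hF : F.Minimal)
    (hh : F.IsHom F h) : Set.InjOn h F.nodes := by
  have hS : F.nodes.image h ⊆ F.nodes := Finset.image_subset_iff.mpr fun _ hσ => hh.mapsTo hσ
  have hcard := hF _ (hle_iff_exists_isHom.mpr ⟨_, hh.isHom_ofFinset_image⟩)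
    (hle_iff_exists_isHom.mpr ⟨_, isHom_ofFinset_decodeLast hS⟩)
  rw [card_ofFinset] at hcard
  exact Finset.card_image_iff.mp (le_antisymm Finset.card_image_le hcard)

end Hom

end QForest

/-- any two h-equivalent minimal `Q`-forests are isomorphic as labeled
forests: there is a bijection between their nodes preserving the tree (prefix) order in
both directions and preserving labels. -/
theorem minimal_hequiv_iso {Q : Type*} [PartialOrder Q] (F G : QForest Q)
    (hF : F.Minimal) (hG : G.Minimal) (h₁ : F.hle G) (h₂ : G.hle F) :
    ∃ e : List ℕ → List ℕ,
      Set.BijOn e ↑F.nodes ↑G.nodes ∧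
      (∀ σ ∈ F.nodes, ∀ τ ∈ F.nodes, (σ <+: τ ↔ e σ <+: e τ)) ∧
      (∀ σ ∈ F.nodes, G.label (e σ) = F.label σ) := by
  obtain ⟨f, hf⟩ := QForest.hle_iff_exists_isHom.mp h₁
  obtain ⟨g, hg⟩ := QForest.hle_iff_exists_isHom.mp h₂
  have hgf := hg.comp hf
  have hinj : Set.InjOn (g ∘ f) F.nodes := hF.injOn_of_isHom hgf
  have hsurj : Set.SurjOn f F.nodes G.nodes :=
    Finset.surjOn_of_injOn_of_card_le f hf.mapsTo hinj.of_comp (hG F h₂ h₁)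
  refine ⟨f, ⟨hf.mapsTo, hinj.of_comp, hsurj⟩, fun σ hσ τ hτ => ⟨hf.prefix_mono σ hσ τ hτ, ?_⟩,
    fun σ hσ => le_antisymm ?_ (hf.label_le σ hσ)⟩
  · exact fun h => hgf.mapsTo.rel_of_rel_apply hinj hgf.prefix_mono hσ hτ
      (hg.prefix_mono _ (hf.mapsTo hσ) _ (hf.mapsTo hτ) h)
  · exact (hg.label_le _ (hf.mapsTo hσ)).trans
      (hgf.mapsTo.apply_le_of_le_apply hinj hgf.label_le hσ)
end

section
/- Every h-precomplete numbering ν : ℕ → S is join-irreducible in the semilattice of numberings of S (with bottom adjoined) under join ⊕ and h-relativized reducibility ≤^h: if ν ≤^h μ₁ ⊕ μ₂ then ν ≤^h μ₁ or ν ≤^h μ₂. -/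
/-- Relativized partial recursiveness: `f` is partial recursive in the (total) oracle `O`. -/
inductive RecursiveInOracle (O : ℕ → ℕ) : (ℕ →. ℕ) → Prop
  | oracle : RecursiveInOracle O O
  | zero : RecursiveInOracle O (pure 0)
  | succ : RecursiveInOracle O Nat.succ
  | left : RecursiveInOracle O ↑fun n : ℕ => n.unpair.1
  | right : RecursiveInOracle O ↑fun n : ℕ => n.unpair.2
  | pair {f g} : RecursiveInOracle O f → RecursiveInOracle O g →
      RecursiveInOracle O fun n => Nat.pair <$> f n <*> g n
  | comp {f g} : RecursiveInOracle O f → RecursiveInOracle O g → RecursiveInOracle O fun n => g n >>= f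
  | prec {f g} : RecursiveInOracle O f → RecursiveInOracle O g → RecursiveInOracle O (Nat.unpaired fun a n =>
      n.rec (f a) fun y IH => do let i ← IH; g (Nat.pair a (Nat.pair y i)))
  | rfind {f} : RecursiveInOracle O f →
      RecursiveInOracle O fun a => Nat.rfind fun n => (fun m => m = 0) <$> f (Nat.pair a n)

/-- Computable (many-one style) reducibility between numberings. -/
def NumRed {S : Type*} (μ ν : ℕ → S) : Prop :=
  ∃ f : ℕ → ℕ, Computable f ∧ ∀ n, μ n = ν (f n)

/-- Reducibility between numberings via an `O`-computable total function. -/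
def NumRedIn {S : Type*} (O : ℕ → ℕ) (μ ν : ℕ → S) : Prop :=
  ∃ f : ℕ → ℕ, RecursiveInOracle O ↑f ∧ ∀ n, μ n = ν (f n)

/-- The join `μ ⊕ ν` of two numberings. -/
def NumJoin {S : Type*} (μ ν : ℕ → S) : ℕ → S :=
  fun n => if n % 2 = 0 then μ (n / 2) else ν (n / 2)

/-- `ν` is `O`-precomplete: every `O`-partial computable function has a total
computable `ν`-totalizer. -/
def Precomplete {S : Type*} (O : ℕ → ℕ) (ν : ℕ → S) : Prop :=
  ∀ ψ : ℕ →. ℕ, RecursiveInOracle O ψ →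
    ∃ t : ℕ → ℕ, Computable t ∧ ∀ (x : ℕ) (hx : (ψ x).Dom), ν (t x) = ν ((ψ x).get hx)

/-- `ν` is `O`-complete with respect to `a`. -/
def CompleteAt {S : Type*} (O : ℕ → ℕ) (ν : ℕ → S) (a : S) : Prop :=
  ∀ ψ : ℕ →. ℕ, RecursiveInOracle O ψ →
    ∃ t : ℕ → ℕ, Computable t ∧ (∀ (x : ℕ) (hx : (ψ x).Dom), ν (t x) = ν ((ψ x).get hx)) ∧
      ∀ x : ℕ, ¬ (ψ x).Dom → ν (t x) = a

open Classical in
/-- The jump (halting problem) of a partial function `U`, as a 0-1 valued total function. -/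
noncomputable def jumpOf (U : ℕ →. ℕ) : ℕ → ℕ :=
  fun x => if (U x).Dom then 1 else 0

open Classical in
/-- The operation `G(μ,ν,h)` defined from a universal `h`-partial computable function `U`:
`G⟨n,x⟩ = ν n` if `U x` diverges and `μ (U x)` if it converges. -/
noncomputable def GOp {S : Type*} (μ ν : ℕ → S) (U : ℕ →. ℕ) : ℕ → S :=
  fun m =>
    if hd : (U (Nat.unpair m).2).Dom then μ ((U (Nat.unpair m).2).get hd)
    else ν (Nat.unpair m).1

/-!
Let `f` witness `ν ≤ʰ μ₁ ⊕ μ₂`. Precompleteness of `ν`, applied to a self-referential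
`h`-partial computable function, yields a computable `g` such that `g ⟨x, y⟩` is a `ν`-index of
`x` when `f (g ⟨x, y⟩)` is even and of `y` when it is odd. If every `x` admits some `y` making
`f (g ⟨x, y⟩)` even, searching for that `y` reduces `ν` to `μ₁`; otherwise some `x₀` makes
`f (g ⟨x₀, y⟩)` odd for all `y`, and `y ↦ f (g ⟨x₀, y⟩) / 2` reduces `ν` to `μ₂`.
-/

namespace RecursiveInOracle

variable {O : ℕ → ℕ}

theorem of_eq {f g : ℕ →. ℕ} (hf : RecursiveInOracle O f) (H : ∀ n, f n = g n) :
    RecursiveInOracle O g :=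
  funext H ▸ hf

theorem of_partrec {f : ℕ →. ℕ} (hf : Nat.Partrec f) : RecursiveInOracle O f := by
  induction hf with
  | zero => exact .zero
  | succ => exact .succ
  | left => exact .left
  | right => exact .right
  | pair _ _ ihf ihg => exact .pair ihf ihg
  | comp _ _ ihf ihg => exact .comp ihf ihg
  | prec _ _ ihf ihg => exact .prec ihf ihg
  | rfind _ ih => exact .rfind ih

theorem of_computable {f : ℕ → ℕ} (hf : Computable f) : RecursiveInOracle O ↑f :=
  of_partrec (Partrec.nat_iff.mp hf.partrec)

theorem map {ψ : ℕ →. ℕ} {g : ℕ → ℕ → ℕ} (hψ : RecursiveInOracle O ψ)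
    (hg : Computable₂ g) : RecursiveInOracle O fun n => (ψ n).map (g n) := by
  have hg' : Computable fun q : ℕ => g q.unpair.1 q.unpair.2 :=
    hg.comp (Computable.fst.comp Computable.unpair) (Computable.snd.comp Computable.unpair)
  refine ((of_computable hg').comp ((of_computable Computable.id).pair hψ)).of_eq fun n => ?_
  refine (Part.bind_some_eq_map _ _).trans ?_
  simp [Seq.seq, Part.map_map, Function.comp_def]

theorem map_total {f : ℕ → ℕ} {g : ℕ → ℕ → ℕ} (hf : RecursiveInOracle O ↑f)
    (hg : Computable₂ g) : RecursiveInOracle O ↑fun n => g n (f n) :=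
  (hf.map hg).of_eq fun n => by simp

theorem comp_total {f g : ℕ → ℕ} (hf : RecursiveInOracle O ↑f)
    (hg : RecursiveInOracle O ↑g) : RecursiveInOracle O ↑(f ∘ g) :=
  (hf.comp hg).of_eq fun _ => Part.bind_some _ _

theorem find {p : ℕ → ℕ} (hp : RecursiveInOracle O ↑p)
    (H : ∀ a, ∃ n, p (Nat.pair a n) = 0) : RecursiveInOracle O ↑fun a => Nat.find (H a) := by
  refine hp.rfind.of_eq fun a => Part.eq_some_iff.mpr (Nat.mem_rfind.mpr ⟨?_, fun hm => ?_⟩)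
  · simpa using Nat.find_spec (H a)
  · simpa using Nat.find_min (H a) hm

end RecursiveInOracle

theorem numRedIn_of_forall_exists {S : Type*} {O p r : ℕ → ℕ} {ν μ : ℕ → S}
    (hp : RecursiveInOracle O ↑p) (hr : RecursiveInOracle O ↑r)
    (hex : ∀ x, ∃ y, p (Nat.pair x y) = 0)
    (hνμ : ∀ x y, p (Nat.pair x y) = 0 → ν x = μ (r (Nat.pair x y))) :
    NumRedIn O ν μ :=
  ⟨fun x => r (Nat.pair x (Nat.find (hex x))),
    hr.comp_total ((hp.find hex).map_total Primrec₂.natPair.to_comp),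
    fun x => hνμ x _ (Nat.find_spec (hex x))⟩

theorem numJoin_of_mod_two_eq_zero {S : Type*} (μ₁ μ₂ : ℕ → S) {n : ℕ}
    (hn : n % 2 = 0) : NumJoin μ₁ μ₂ n = μ₁ (n / 2) :=
  if_pos hn

theorem numJoin_of_mod_two_ne_zero {S : Type*} (μ₁ μ₂ : ℕ → S) {n : ℕ}
    (hn : n % 2 ≠ 0) : NumJoin μ₁ μ₂ n = μ₂ (n / 2) :=
  if_neg hn

open Nat.Partrec (Code)

def evalSelf : ℕ →. ℕ := fun m => Code.eval (Denumerable.ofNat Code m.unpair.1) m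

theorem evalSelf_partrec : Nat.Partrec evalSelf := by
  rw [← Partrec.nat_iff]
  exact Code.eval_part.comp ((Computable.ofNat Code).comp (Computable.fst.comp Computable.unpair))
    Computable.id

theorem exists_evalSelf_eq {t : ℕ → ℕ} (ht : Computable t) :
    ∃ k, ∀ w, evalSelf (Nat.pair k w) = Part.some (t (Nat.pair k w)) := by
  obtain ⟨c, hc⟩ := Code.exists_code.mp (Partrec.nat_iff.mp ht.partrec)
  exact ⟨Encodable.encode c, fun w => by simp [evalSelf, hc]⟩

def parityChoice (f : ℕ → ℕ) : ℕ →. ℕ := fun m =>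
  (evalSelf m).map fun v => if f v % 2 = 0 then m.unpair.2.unpair.1 else m.unpair.2.unpair.2

theorem recursiveInOracle_parityChoice {O f : ℕ → ℕ} (hf : RecursiveInOracle O ↑f) :
    RecursiveInOracle O (parityChoice f) := by
  have hchoose : Computable₂ fun m v : ℕ =>
      if v % 2 = 0 then m.unpair.2.unpair.1 else m.unpair.2.unpair.2 := by
    have hxy : Primrec fun p : ℕ × ℕ => p.1.unpair.2.unpair :=
      Primrec.unpair.comp (Primrec.snd.comp (Primrec.unpair.comp Primrec.fst))
    exact (Primrec.ite (Primrec.eq.comp (Primrec.nat_mod.comp Primrec.snd (Primrec.const 2))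
      (Primrec.const 0)) (Primrec.fst.comp hxy) (Primrec.snd.comp hxy)).to_comp
  refine ((hf.comp (.of_partrec evalSelf_partrec)).map hchoose).of_eq fun m => ?_
  refine (congrArg _ (Part.bind_some_eq_map f (evalSelf m))).trans ?_
  rw [Part.map_map]
  rfl

theorem Precomplete.exists_parity_fixedPoint {S : Type*} {O f : ℕ → ℕ} {ν : ℕ → S}
    (hpre : Precomplete O ν) (hf : RecursiveInOracle O ↑f) :
    ∃ g : ℕ → ℕ, Computable g ∧
      ∀ x y, ν (g (Nat.pair x y)) = ν (if f (g (Nat.pair x y)) % 2 = 0 then x else y) := by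
  obtain ⟨t, ht, htot⟩ := hpre _ (recursiveInOracle_parityChoice hf)
  -- `k` numbers a program for the totalizer `t` itself, so on inputs `⟨k, w⟩` the function
  -- `parityChoice f` converges and inspects the parity of `f` at `t ⟨k, w⟩`.
  obtain ⟨k, hk⟩ := exists_evalSelf_eq ht
  refine ⟨fun w => t (Nat.pair k w),
    ht.comp (Primrec₂.natPair.comp (Primrec.const k) Primrec.id).to_comp, fun x y => ?_⟩
  have hchoice : parityChoice f (Nat.pair k (Nat.pair x y)) =
      Part.some (if f (t (Nat.pair k (Nat.pair x y))) % 2 = 0 then x else y) := by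
    simp [parityChoice, hk]
  simpa [hchoice] using htot (Nat.pair k (Nat.pair x y)) (by simp [hchoice])

/-- every `h`-precomplete numbering is join-irreducible w.r.t. `≤^h`. -/
theorem precomplete_joinIrreducible {S : Type*} (h : ℕ → ℕ) (ν μ₁ μ₂ : ℕ → S)
    (hpre : Precomplete h ν) (hred : NumRedIn h ν (NumJoin μ₁ μ₂)) :
    NumRedIn h ν μ₁ ∨ NumRedIn h ν μ₂ := by
  obtain ⟨f, hf, hνf⟩ := hred
  obtain ⟨g, hg, hfix⟩ := hpre.exists_parity_fixedPoint hf
  have hfg : RecursiveInOracle h ↑(f ∘ g) := hf.comp_total (.of_computable hg)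
  have hmod : RecursiveInOracle h ↑fun n => f (g n) % 2 :=
    hfg.map_total (g := fun _ v => v % 2)
      (Primrec.nat_mod.comp Primrec.snd (Primrec.const 2)).to_comp
  have hdiv : RecursiveInOracle h ↑fun n => f (g n) / 2 :=
    hfg.map_total (g := fun _ v => v / 2)
      (Primrec.nat_div.comp Primrec.snd (Primrec.const 2)).to_comp
  by_cases hex : ∀ x, ∃ y, f (g (Nat.pair x y)) % 2 = 0
  · refine .inl (numRedIn_of_forall_exists hmod hdiv hex fun x y hy => ?_)
    rw [← numJoin_of_mod_two_eq_zero μ₁ μ₂ hy, ← hνf, hfix, if_pos hy]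
  · push Not at hex
    obtain ⟨x₀, hodd⟩ := hex
    refine .inr ⟨fun y => f (g (Nat.pair x₀ y)) / 2,
      hdiv.comp_total
        (.of_computable (Primrec₂.natPair.comp (Primrec.const x₀) Primrec.id).to_comp),
      fun y => ?_⟩
    rw [← numJoin_of_mod_two_ne_zero μ₁ μ₂ (hodd y), ← hνf, hfix, if_neg (hodd y)]
end

section
/- For h-precomplete numberings μ and ν of a set S: μ ≤^h ν implies μ ≤ ν (reducibility with oracle h implies plain computable reducibility). -/
theorem precomplete_redIn_iff_red_general {S : Type*} (h : ℕ → ℕ) (μ ν : ℕ → S)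
    (hν : Precomplete h ν) (hred : NumRedIn h μ ν) :
    NumRed μ ν := by
  obtain ⟨f, hf, hμν⟩ := hred
  obtain ⟨t, ht, htot⟩ := hν f hf
  exact ⟨t, ht, fun n => (hμν n).trans (htot n trivial).symm⟩

/-- for `h`-precomplete numberings, `≤^h` implies plain `≤`. -/
theorem precomplete_redIn_iff_red {S : Type*} (h : ℕ → ℕ) (μ ν : ℕ → S)
    (hμ : Precomplete h μ) (hν : Precomplete h ν) (hred : NumRedIn h μ ν) :
    NumRed μ ν :=
  precomplete_redIn_iff_red_general h μ ν hν hred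
end
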